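/- Regret bound for the fixed-share rule with specialized experts: under convex losses with ℓ_t(δ_i) ∈ [0,L] for active i, for every m ∈ {0,…,T-1} and every legal compound expert j_1^T with at most m switches, Σ_{t=1}^T (ℓ_t(p_t) - ℓ_t(δ_{j_t})) ≤ ((m+1)/η) ln N + (1/η) ln(1/(α^m (1-α)^{T-m-1})) + (η/8) L² T. -/

import Mathlib

/-!
The total weight `W t = ∑ i ∈ E t, w t i` of fixed share equals the total loss-updated weight
`∑ i ∈ E (t-1), w (t-1) i * exp (-η ℓ (t-1) (δ i))` of the previous round, since sharing only moves
mass around. Hoeffding's lemma and Jensen's inequality give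
`W (t+1) ≤ W t * exp (-η ℓ t (p t) + η² L² / 8)`, hence
`W T ≤ exp (-η ∑ ℓ t (p t) + T η² L² / 8)`. On the other hand, along a legal compound expert `σ`
the weight `w t (σ t)` keeps, besides its exponential update, at least a fraction `1 - α` of
itself at a step without switch and `α / N` at a switch, so
`W T ≥ α ^ m (1 - α) ^ (T - m - 1) / N ^ (m + 1) * exp (-η ∑ ℓ t (δ (σ t)))`.
Comparing the logarithms of the two bounds gives the regret bound.
-/

/-- The Dirac mass on expert `j`, viewed as a convex weight vector. -/
noncomputable def dirac {N : ℕ} (j : Fin N) : Fin N → ℝ := fun i => if i = j then 1 else 0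

open Real Finset

-- Hoeffding's lemma for the law `∑ i ∈ s, q i • δ_i`.
open MeasureTheory ProbabilityTheory in
theorem sum_mul_exp_le_of_mem_Icc {ι : Type*} (s : Finset ι) {q x : ι → ℝ} {a b : ℝ}
    (hq0 : ∀ i ∈ s, 0 ≤ q i) (hq1 : ∑ i ∈ s, q i = 1) (hx : ∀ i ∈ s, x i ∈ Set.Icc a b)
    (t : ℝ) :
    ∑ i ∈ s, q i * exp (t * x i) ≤ exp (t * ∑ i ∈ s, q i * x i + (b - a) ^ 2 * t ^ 2 / 8) := by
  let _ : MeasurableSpace s := ⊤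
  have _ : DiscreteMeasurableSpace s := ⟨fun _ => trivial⟩
  let μ : Measure s := ∑ i : s, ENNReal.ofReal (q i) • Measure.dirac i
  have hμ (f : ι → ℝ) : ∫ i, f i ∂μ = ∑ i ∈ s, q i * f i := by
    rw [integral_finsetSum_measure fun _ _ =>
      Integrable.of_finite.smul_measure ENNReal.ofReal_ne_top, ← sum_coe_sort s]
    refine sum_congr rfl fun i _ => ?_
    rw [integral_smul_measure, integral_dirac, ENNReal.toReal_ofReal (hq0 i i.2), smul_eq_mul]
  have : IsProbabilityMeasure μ := by
    constructor
    simp only [μ, Measure.coe_finsetSum, Finset.sum_apply, Measure.smul_apply, measure_univ,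
      smul_eq_mul, mul_one]
    rw [sum_coe_sort s fun i => ENNReal.ofReal (q i), ← ENNReal.ofReal_sum_of_nonneg hq0,
      hq1, ENNReal.ofReal_one]
  have hmgf := (hasSubgaussianMGF_of_mem_Icc (μ := μ) (X := fun i : s => x i)
    (measurable_of_finite _).aemeasurable (ae_of_all _ fun i => hx i i.2)).mgf_le t
  simp only [mgf, hμ x] at hmgf
  rw [hμ fun i => exp (t * (x i - ∑ i ∈ s, q i * x i))] at hmgf
  have hcenter : ∑ i ∈ s, q i * exp (t * (x i - ∑ i ∈ s, q i * x i))
      = exp (-(t * ∑ i ∈ s, q i * x i)) * ∑ i ∈ s, q i * exp (t * x i) := by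
    rw [mul_sum]
    refine sum_congr rfl fun i _ => ?_
    rw [mul_sub, sub_eq_add_neg, exp_add]
    ring
  rw [hcenter, ← le_div_iff₀' (exp_pos _), div_eq_mul_inv, ← exp_neg, neg_neg, ← exp_add] at hmgf
  refine hmgf.trans_eq (congrArg exp ?_)
  push_cast
  rw [Real.norm_eq_abs, div_pow, sq_abs]
  ring

theorem pow_mul_pow_sub_le_pow_mul_max_pow {a b : ℝ} {k m n : ℕ} (ha : 0 ≤ a) (hb : 0 ≤ b)
    (hkm : k ≤ m) (hmn : m ≤ n) : a ^ m * b ^ (n - m) ≤ a ^ k * max b a ^ (n - k) := by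
  calc a ^ m * b ^ (n - m) = a ^ k * (a ^ (m - k) * b ^ (n - m)) := by
        rw [← mul_assoc, ← pow_add, Nat.add_sub_cancel' hkm]
    _ ≤ a ^ k * (max b a ^ (m - k) * max b a ^ (n - m)) := by
        gcongr
        exacts [le_max_right b a, le_max_left b a]
    _ = a ^ k * max b a ^ (n - k) := by rw [← pow_add, add_comm, Nat.sub_add_sub_cancel hmn hkm]

theorem dirac_mem_stdSimplex {N : ℕ} (j : Fin N) : dirac j ∈ stdSimplex ℝ (Fin N) := by
  refine ⟨fun i => ?_, ?_⟩
  · unfold dirac; split_ifs <;> norm_num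
  · simp [dirac]

theorem eq_sum_smul_dirac {N : ℕ} {s : Finset (Fin N)} {q : Fin N → ℝ}
    (hq : ∀ i ∉ s, q i = 0) : q = ∑ i ∈ s, q i • dirac i := by
  funext k
  by_cases hk : k ∈ s <;> simp [Finset.sum_apply, dirac, hk, hq]

theorem ConvexOn.map_le_sum_mul_map_dirac {N : ℕ} {f : (Fin N → ℝ) → ℝ}
    (hf : ConvexOn ℝ (stdSimplex ℝ (Fin N)) f) {s : Finset (Fin N)} {q : Fin N → ℝ}
    (hq : ∀ i ∉ s, q i = 0) (hq0 : ∀ i ∈ s, 0 ≤ q i) (hq1 : ∑ i ∈ s, q i = 1) :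
    f q ≤ ∑ i ∈ s, q i * f (dirac i) := by
  conv_lhs => rw [eq_sum_smul_dirac hq]
  exact hf.map_sum_le hq0 hq1 fun i _ => dirac_mem_stdSimplex i

theorem ConvexOn.sum_mul_exp_neg_le {N : ℕ} {f : (Fin N → ℝ) → ℝ}
    (hf : ConvexOn ℝ (stdSimplex ℝ (Fin N)) f) {s : Finset (Fin N)} {q : Fin N → ℝ}
    (hq : ∀ i ∉ s, q i = 0) (hq0 : ∀ i ∈ s, 0 ≤ q i) (hq1 : ∑ i ∈ s, q i = 1)
    {η L : ℝ} (hη : 0 ≤ η) (hfL : ∀ i ∈ s, f (dirac i) ∈ Set.Icc 0 L) :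
    ∑ i ∈ s, q i * exp (-η * f (dirac i)) ≤ exp (-η * f q + η ^ 2 * L ^ 2 / 8) := by
  have hjensen := mul_le_mul_of_nonneg_left (hf.map_le_sum_mul_map_dirac hq hq0 hq1) hη
  refine (sum_mul_exp_le_of_mem_Icc s hq0 hq1 hfL (-η)).trans (exp_le_exp.2 ?_)
  linarith

section FixedShare

variable {ι : Type*} [DecidableEq ι]

/-- One fixed-share redistribution from the active set `E` to the next active set `F`: the mass
of experts falling asleep (`E \ F`) and a fraction `α` of the mass of experts staying awake are
spread uniformly over `F`. -/
noncomputable def fixedShare (α : ℝ) (E F : Finset ι) (v : ι → ℝ) (j : ι) : ℝ :=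
  if j ∈ F then
    (1 / (#F : ℝ)) * (∑ i ∈ E \ F, v i) + (α / (#F : ℝ)) * (∑ i ∈ E ∩ F, v i)
      + (1 - α) * (if j ∈ E ∩ F then v j else 0)
  else 0

variable {α : ℝ} {E F : Finset ι} {v : ι → ℝ}

theorem fixedShare_nonneg (h0α : 0 ≤ α) (hα1 : α ≤ 1) (hv : ∀ i, 0 ≤ v i) (j : ι) :
    0 ≤ fixedShare α E F v j := by
  by_cases hj : j ∈ F
  · have := sum_nonneg fun i (_ : i ∈ E \ F) => hv i
    have := sum_nonneg fun i (_ : i ∈ E ∩ F) => hv i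
    have := hv j
    have : 0 ≤ 1 - α := by linarith
    rw [fixedShare, if_pos hj]
    positivity
  · rw [fixedShare, if_neg hj]

theorem sum_fixedShare (hF : F.Nonempty) : ∑ j ∈ F, fixedShare α E F v j = ∑ i ∈ E, v i := by
  have hstay : ∑ j ∈ F, (if j ∈ E ∩ F then v j else 0) = ∑ i ∈ E ∩ F, v i := by
    rw [sum_ite_mem, inter_comm F, inter_assoc, inter_self]
  have hcard : (#F : ℝ) ≠ 0 := by exact_mod_cast hF.card_pos.ne'
  unfold fixedShare
  rw [sum_ite_of_true fun j hj => hj, sum_add_distrib, sum_const, ← mul_sum, hstay,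
    nsmul_eq_mul, ← sum_inter_add_sum_sdiff E F]
  field_simp
  ring

theorem div_mul_le_fixedShare {n : ℕ} (h0α : 0 ≤ α) (hα1 : α ≤ 1) (hv : ∀ i, 0 ≤ v i)
    {i j : ι} (hi : i ∈ E) (hj : j ∈ F) (hFn : #F ≤ n) :
    α / n * v i ≤ fixedShare α E F v j := by
  have hF : (0 : ℝ) < #F := by exact_mod_cast card_pos.2 ⟨j, hj⟩
  have hFn : (#F : ℝ) ≤ n := by exact_mod_cast hFn
  have hsleep := sum_nonneg fun i (_ : i ∈ E \ F) => hv i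
  have hawake := sum_nonneg fun i (_ : i ∈ E ∩ F) => hv i
  have hstay : 0 ≤ (1 - α) * (if j ∈ E ∩ F then v j else 0) := by
    have := hv j
    have : 0 ≤ 1 - α := by linarith
    positivity
  rw [fixedShare, if_pos hj]
  by_cases hiF : i ∈ F
  · have hvi : v i ≤ ∑ k ∈ E ∩ F, v k := single_le_sum (fun k _ => hv k) (mem_inter.2 ⟨hi, hiF⟩)
    have : α / n * v i ≤ α / #F * ∑ k ∈ E ∩ F, v k :=
      mul_le_mul (by gcongr) hvi (hv i) (by positivity)
    have : 0 ≤ 1 / (#F : ℝ) * ∑ k ∈ E \ F, v k := by positivity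
    linarith
  · have hvi : v i ≤ ∑ k ∈ E \ F, v k := single_le_sum (fun k _ => hv k) (mem_sdiff.2 ⟨hi, hiF⟩)
    have hcoef : α / n ≤ 1 / #F :=
      calc α / n ≤ 1 / n := by gcongr
        _ ≤ 1 / #F := by gcongr
    have : α / n * v i ≤ 1 / #F * ∑ k ∈ E \ F, v k :=
      mul_le_mul hcoef hvi (hv i) (by positivity)
    have : 0 ≤ α / #F * ∑ k ∈ E ∩ F, v k := by positivity
    linarith

theorem sub_mul_le_fixedShare (h0α : 0 ≤ α) (hv : ∀ i, 0 ≤ v i) {j : ι} (hj : j ∈ E ∩ F) :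
    (1 - α) * v j ≤ fixedShare α E F v j := by
  have hsleep := sum_nonneg fun i (_ : i ∈ E \ F) => hv i
  have hawake := sum_nonneg fun i (_ : i ∈ E ∩ F) => hv i
  rw [fixedShare, if_pos (mem_inter.1 hj).2, if_pos hj]
  have : 0 ≤ 1 / (#F : ℝ) * ∑ k ∈ E \ F, v k + α / #F * ∑ k ∈ E ∩ F, v k := by positivity
  linarith

/-- At a non-switch both lower bounds `1 - α` and `α / n` on `fixedShare` are available; keeping
the larger one makes `α / n` the smallest factor, so a compound expert with fewer than `m`
switches also satisfies the `m`-switch bound. -/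
noncomputable def switchFactor (α : ℝ) (n : ℕ) (i j : ι) : ℝ :=
  if i = j then max (1 - α) (α / n) else α / n

theorem switchFactor_nonneg (h0α : 0 ≤ α) (n : ℕ) (i j : ι) : 0 ≤ switchFactor α n i j := by
  unfold switchFactor
  split_ifs
  exacts [le_max_of_le_right (by positivity), by positivity]

theorem switchFactor_mul_le_fixedShare {n : ℕ} (h0α : 0 ≤ α) (hα1 : α ≤ 1)
    (hv : ∀ i, 0 ≤ v i) {i j : ι} (hi : i ∈ E) (hj : j ∈ F) (hFn : #F ≤ n) :
    switchFactor α n i j * v i ≤ fixedShare α E F v j := by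
  unfold switchFactor
  split_ifs with hij
  · subst hij
    rw [max_mul_of_nonneg _ _ (hv i)]
    exact max_le (sub_mul_le_fixedShare h0α hv (mem_inter.2 ⟨hi, hj⟩))
      (div_mul_le_fixedShare h0α hα1 hv hi hj hFn)
  · exact div_mul_le_fixedShare h0α hα1 hv hi hj hFn

theorem pow_mul_pow_le_prod_switchFactor {n T m : ℕ} (h0α : 0 ≤ α) (hα1 : α ≤ 1) (σ : ℕ → ι)
    (hmT : m ≤ T) (hsw : #{t ∈ Ico 1 (T + 1) | σ (t - 1) ≠ σ t} ≤ m) :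
    (α / n) ^ m * (1 - α) ^ (T - m)
      ≤ ∏ t ∈ Ico 1 (T + 1), switchFactor α n (σ (t - 1)) (σ t) := by
  simp only [ne_eq] at hsw
  have hcard := card_filter_add_card_filter_not (s := Ico 1 (T + 1)) (fun t => σ (t - 1) = σ t)
  rw [Nat.card_Ico, Nat.add_sub_cancel] at hcard
  unfold switchFactor
  rw [prod_ite, prod_const, prod_const, mul_comm (max _ _ ^ _),
    show #{t ∈ Ico 1 (T + 1) | σ (t - 1) = σ t} = T - #{t ∈ Ico 1 (T + 1) | ¬σ (t - 1) = σ t}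
      by omega]
  exact pow_mul_pow_sub_le_pow_mul_max_pow (by positivity) (by linarith) hsw hmT

end FixedShare

structure IsFixedShare {N : ℕ} (η α : ℝ) (E : ℕ → Finset (Fin N))
    (ℓ : ℕ → (Fin N → ℝ) → ℝ) (w : ℕ → Fin N → ℝ) : Prop where
  init : ∀ i, w 0 i = if i ∈ E 0 then (1 : ℝ) / #(E 0) else 0
  succ : ∀ t j, w (t + 1) j =
    fixedShare α (E t) (E (t + 1)) (fun i => w t i * exp (-η * ℓ t (dirac i))) j

namespace IsFixedShare

variable {N : ℕ} {η α : ℝ} {E : ℕ → Finset (Fin N)} {ℓ : ℕ → (Fin N → ℝ) → ℝ}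
  {w : ℕ → Fin N → ℝ}

theorem nonneg (hw : IsFixedShare η α E ℓ w) (h0α : 0 ≤ α) (hα1 : α ≤ 1) (t : ℕ) (i : Fin N) :
    0 ≤ w t i := by
  induction t generalizing i with
  | zero => rw [hw.init]; positivity
  | succ t ih =>
    rw [hw.succ]
    exact fixedShare_nonneg h0α hα1 (fun i => mul_nonneg (ih i) (exp_pos _).le) i

theorem sum_zero (hw : IsFixedShare η α E ℓ w) (hE : (E 0).Nonempty) :
    ∑ i ∈ E 0, w 0 i = 1 := by
  rw [sum_congr rfl fun i hi => by rw [hw.init, if_pos hi], sum_const, nsmul_eq_mul,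
    mul_one_div_cancel (by exact_mod_cast hE.card_pos.ne')]

theorem sum_succ (hw : IsFixedShare η α E ℓ w) {t : ℕ} (hE : (E (t + 1)).Nonempty) :
    ∑ j ∈ E (t + 1), w (t + 1) j = ∑ i ∈ E t, w t i * exp (-η * ℓ t (dirac i)) := by
  rw [sum_congr rfl fun j _ => hw.succ t j]
  exact sum_fixedShare hE

theorem sum_succ_le (hw : IsFixedShare η α E ℓ w) (h0α : 0 ≤ α) (hα1 : α ≤ 1) {t : ℕ}
    (hE : (E (t + 1)).Nonempty) (hpos : 0 < ∑ k ∈ E t, w t k) {p : Fin N → ℝ}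
    (hp : ∀ i, p i = (if i ∈ E t then w t i else 0) / ∑ k ∈ E t, w t k)
    (hconv : ConvexOn ℝ (stdSimplex ℝ (Fin N)) (ℓ t)) {L : ℝ}
    (hbound : ∀ i ∈ E t, ℓ t (dirac i) ∈ Set.Icc 0 L) (hη : 0 ≤ η) :
    ∑ j ∈ E (t + 1), w (t + 1) j
      ≤ (∑ k ∈ E t, w t k) * exp (-η * ℓ t p + η ^ 2 * L ^ 2 / 8) := by
  set W := ∑ k ∈ E t, w t k
  have hpE : ∀ i ∈ E t, p i = w t i / W := fun i hi => by rw [hp, if_pos hi]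
  have hp_out : ∀ i ∉ E t, p i = 0 := fun i hi => by rw [hp, if_neg hi, zero_div]
  have hp0 : ∀ i ∈ E t, 0 ≤ p i := fun i hi => by
    rw [hpE i hi]; exact div_nonneg (hw.nonneg h0α hα1 t i) hpos.le
  have hp1 : ∑ i ∈ E t, p i = 1 := by
    rw [sum_congr rfl hpE, ← sum_div, div_self hpos.ne']
  calc ∑ j ∈ E (t + 1), w (t + 1) j = ∑ i ∈ E t, w t i * exp (-η * ℓ t (dirac i)) :=
        hw.sum_succ hE
    _ = W * ∑ i ∈ E t, p i * exp (-η * ℓ t (dirac i)) := by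
        rw [mul_sum]
        refine sum_congr rfl fun i hi => ?_
        rw [hpE i hi]
        field_simp
    _ ≤ W * exp (-η * ℓ t p + η ^ 2 * L ^ 2 / 8) :=
        mul_le_mul_of_nonneg_left (hconv.sum_mul_exp_neg_le hp_out hp0 hp1 hη hbound) hpos.le

theorem sum_le_exp (hw : IsFixedShare η α E ℓ w) (h0α : 0 ≤ α) (hα1 : α ≤ 1)
    (hE : ∀ t, (E t).Nonempty) (hpos : ∀ t, 0 < ∑ k ∈ E t, w t k) {p : ℕ → Fin N → ℝ}
    (hp : ∀ t i, p t i = (if i ∈ E t then w t i else 0) / ∑ k ∈ E t, w t k)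
    (hconv : ∀ t, ConvexOn ℝ (stdSimplex ℝ (Fin N)) (ℓ t)) {L : ℝ} {T : ℕ}
    (hbound : ∀ t, t < T → ∀ i ∈ E t, ℓ t (dirac i) ∈ Set.Icc 0 L) (hη : 0 ≤ η) :
    ∑ k ∈ E T, w T k ≤ exp (-η * ∑ t ∈ range T, ℓ t (p t) + T * (η ^ 2 * L ^ 2 / 8)) := by
  induction T with
  | zero => simp [hw.sum_zero (hE 0)]
  | succ T ih =>
    calc ∑ k ∈ E (T + 1), w (T + 1) k
        ≤ (∑ k ∈ E T, w T k) * exp (-η * ℓ T (p T) + η ^ 2 * L ^ 2 / 8) :=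
          hw.sum_succ_le h0α hα1 (hE _) (hpos T) (hp T) (hconv T) (hbound T T.lt_succ_self) hη
      _ ≤ exp (-η * ∑ t ∈ range T, ℓ t (p t) + T * (η ^ 2 * L ^ 2 / 8))
            * exp (-η * ℓ T (p T) + η ^ 2 * L ^ 2 / 8) :=
          mul_le_mul_of_nonneg_right (ih fun t ht => hbound t (ht.trans T.lt_succ_self))
            (exp_pos _).le
      _ = _ := by
          rw [← exp_add, sum_range_succ]
          push_cast
          ring_nf

theorem prod_switchFactor_div_mul_exp_le (hw : IsFixedShare η α E ℓ w) (h0α : 0 ≤ α)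
    (hα1 : α ≤ 1) {σ : ℕ → Fin N} {T : ℕ} (hσ : ∀ t ≤ T, σ t ∈ E t) :
    (∏ u ∈ Ico 1 (T + 1), switchFactor α N (σ (u - 1)) (σ u)) / N
        * exp (-η * ∑ t ∈ range T, ℓ t (dirac (σ t)))
      ≤ w T (σ T) := by
  have hcard (t : ℕ) : #(E t) ≤ N := by simpa using card_le_univ (E t)
  induction T with
  | zero =>
    have hE0 : 0 < #(E 0) := card_pos.2 ⟨σ 0, hσ 0 le_rfl⟩
    rw [hw.init, if_pos (hσ 0 le_rfl)]
    simp only [zero_add, Ico_self, prod_empty, range_zero, sum_empty, mul_zero, exp_zero, mul_one]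
    gcongr
    exact_mod_cast hcard 0
  | succ T ih =>
    have hv := fun i => mul_nonneg (hw.nonneg h0α hα1 T i) (exp_pos (-η * ℓ T (dirac i))).le
    calc _ = switchFactor α N (σ T) (σ (T + 1)) * ((∏ u ∈ Ico 1 (T + 1),
            switchFactor α N (σ (u - 1)) (σ u)) / N * exp (-η * ∑ t ∈ range T, ℓ t (dirac (σ t)))
            * exp (-η * ℓ T (dirac (σ T)))) := by
          rw [prod_Ico_succ_top (by omega), sum_range_succ, mul_add, exp_add,
            Nat.add_sub_cancel]
          ring
      _ ≤ switchFactor α N (σ T) (σ (T + 1)) * (w T (σ T) * exp (-η * ℓ T (dirac (σ T)))) := by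
          gcongr
          · exact switchFactor_nonneg h0α _ _ _
          · exact ih fun t ht => hσ t (by omega)
      _ ≤ w (T + 1) (σ (T + 1)) := by
          rw [hw.succ]
          exact switchFactor_mul_le_fixedShare h0α hα1 hv (hσ T (by omega)) (hσ _ le_rfl)
            (hcard _)

theorem prod_switchFactor_div_mul_exp_le_sum (hw : IsFixedShare η α E ℓ w) (h0α : 0 ≤ α)
    (hα1 : α ≤ 1) {σ : ℕ → Fin N} {T : ℕ} (hE : (E (T + 1)).Nonempty)
    (hσ : ∀ t ≤ T, σ t ∈ E t) :
    (∏ u ∈ Ico 1 (T + 1), switchFactor α N (σ (u - 1)) (σ u)) / N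
        * exp (-η * ∑ t ∈ range (T + 1), ℓ t (dirac (σ t)))
      ≤ ∑ k ∈ E (T + 1), w (T + 1) k := by
  rw [sum_range_succ, mul_add, exp_add, ← mul_assoc, hw.sum_succ hE]
  calc _ ≤ w T (σ T) * exp (-η * ℓ T (dirac (σ T))) := by
        gcongr
        exact hw.prod_switchFactor_div_mul_exp_le h0α hα1 hσ
    _ ≤ _ := single_le_sum (f := fun i => w T i * exp (-η * ℓ T (dirac i)))
        (fun i _ => mul_nonneg (hw.nonneg h0α hα1 T i) (exp_pos _).le) (hσ T le_rfl)

end IsFixedShare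

theorem sub_le_of_mul_exp_le_exp {η K a b C : ℝ} (hη : 0 < η) (hK : 0 < K)
    (h : K * exp (-η * b) ≤ exp (-η * a + C)) : a - b ≤ log (1 / K) / η + C / η := by
  have := log_le_log (by positivity) h
  rw [log_mul hK.ne' (exp_pos _).ne', log_exp, log_exp] at this
  rw [one_div, log_inv, ← add_div, le_div_iff₀ hη]
  linarith

theorem fixed_share_regret_bound_general
    (N T m : ℕ) (hN : 0 < N) (hT : 1 ≤ T) (hm : m ≤ T - 1)
    (η α L : ℝ) (hη : 0 < η) (hα : 0 < α) (hα1 : α < 1)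
    (E : ℕ → Finset (Fin N)) (hE : ∀ t, (E t).Nonempty)
    (ℓ : ℕ → (Fin N → ℝ) → ℝ)
    (hconv : ∀ t, ConvexOn ℝ (stdSimplex ℝ (Fin N)) (ℓ t))
    (hbound : ∀ t, t < T → ∀ i ∈ E t, ℓ t (dirac i) ∈ Set.Icc (0 : ℝ) L)
    -- the fixed-share rule: weights `w` and predictions `p`
    (w : ℕ → Fin N → ℝ)
    (hw0 : ∀ i, w 0 i = if i ∈ E 0 then (1 : ℝ) / (E 0).card else 0)
    (hupd : ∀ t j, w (t + 1) j =
      if j ∈ E (t + 1) then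
        (1 / ((E (t + 1)).card : ℝ)) *
            (∑ i ∈ E t \ E (t + 1), w t i * Real.exp (-η * ℓ t (dirac i)))
          + (α / ((E (t + 1)).card : ℝ)) *
              (∑ i ∈ E t ∩ E (t + 1), w t i * Real.exp (-η * ℓ t (dirac i)))
          + (1 - α) *
              (if j ∈ E t ∩ E (t + 1) then w t j * Real.exp (-η * ℓ t (dirac j)) else 0)
      else 0)
    (hpos : ∀ t, 0 < ∑ k ∈ E t, w t k)
    (p : ℕ → Fin N → ℝ)
    (hp : ∀ t i, p t i = (if i ∈ E t then w t i else 0) / ∑ k ∈ E t, w t k)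
    -- a legal compound expert with at most `m` switches
    (σ : ℕ → Fin N)
    (hleg : ∀ t, t < T → σ t ∈ E t)
    (hsw : ((Finset.Ico 1 T).filter fun t => σ (t - 1) ≠ σ t).card ≤ m) :
    ∑ t ∈ Finset.range T, (ℓ t (p t) - ℓ t (dirac (σ t)))
      ≤ ((m : ℝ) + 1) / η * Real.log N
        + (1 / η) * Real.log (1 / (α ^ m * (1 - α) ^ (T - m - 1)))
        + η / 8 * L ^ 2 * T := by
  obtain ⟨T, rfl⟩ : ∃ T', T = T' + 1 := ⟨T - 1, by omega⟩
  have hw : IsFixedShare η α E ℓ w := ⟨hw0, hupd⟩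
  have hN' : (0 : ℝ) < N := by exact_mod_cast hN
  have hupper := hw.sum_le_exp hα.le hα1.le hE hpos hp hconv hbound hη.le
  have hlower := hw.prod_switchFactor_div_mul_exp_le_sum hα.le hα1.le (σ := σ) (T := T) (hE _)
    fun t ht => hleg t (by omega)
  have hprod := pow_mul_pow_le_prod_switchFactor (n := N) hα.le hα1.le σ (by omega) hsw
  have key : α ^ m * (1 - α) ^ (T - m) / N ^ (m + 1)
        * exp (-η * ∑ t ∈ range (T + 1), ℓ t (dirac (σ t)))
      ≤ exp (-η * ∑ t ∈ range (T + 1), ℓ t (p t) + ↑(T + 1) * (η ^ 2 * L ^ 2 / 8)) := by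
    calc _ = (α / N) ^ m * (1 - α) ^ (T - m) / N
          * exp (-η * ∑ t ∈ range (T + 1), ℓ t (dirac (σ t))) := by
          rw [div_pow, pow_succ]
          field_simp
      _ ≤ _ := by gcongr
      _ ≤ _ := hlower.trans hupper
  rw [sum_sub_distrib, show T + 1 - m - 1 = T - m by omega]
  refine (sub_le_of_mul_exp_le_exp hη (by positivity) key).trans_eq ?_
  rw [one_div_div, div_eq_mul_one_div ((N : ℝ) ^ (m + 1)), log_mul (by positivity) (by positivity),
    log_pow]
  push_cast
  field_simp

/-- Regret bound for the fixed-share rule `F_{η,α}` with specialized experts: under convex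
losses with `ℓ_t(δ_i) ∈ [0, L]` for active `i`, for every `m ∈ {0, …, T-1}` and every legal
compound expert with at most `m` switches,
`Σ_t (ℓ_t(p_t) - ℓ_t(δ_{j_t})) ≤ ((m+1)/η) ln N + (1/η) ln(1/(α^m (1-α)^{T-m-1})) + (η/8) L² T`. -/
theorem fixed_share_regret_bound
    (N T m : ℕ) (hN : 0 < N) (hT : 1 ≤ T) (hm : m ≤ T - 1)
    (η α L : ℝ) (hη : 0 < η) (hα : 0 < α) (hα1 : α < 1) (hL : 0 ≤ L)
    (E : ℕ → Finset (Fin N)) (hE : ∀ t, (E t).Nonempty)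
    (ℓ : ℕ → (Fin N → ℝ) → ℝ)
    (hconv : ∀ t, ConvexOn ℝ (stdSimplex ℝ (Fin N)) (ℓ t))
    (hbound : ∀ t, t < T → ∀ i ∈ E t, ℓ t (dirac i) ∈ Set.Icc (0 : ℝ) L)
    -- the fixed-share rule: weights `w` and predictions `p`
    (w : ℕ → Fin N → ℝ)
    (hw0 : ∀ i, w 0 i = if i ∈ E 0 then (1 : ℝ) / (E 0).card else 0)
    (hupd : ∀ t j, w (t + 1) j =
      if j ∈ E (t + 1) then
        (1 / ((E (t + 1)).card : ℝ)) *
            (∑ i ∈ E t \ E (t + 1), w t i * Real.exp (-η * ℓ t (dirac i)))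
          + (α / ((E (t + 1)).card : ℝ)) *
              (∑ i ∈ E t ∩ E (t + 1), w t i * Real.exp (-η * ℓ t (dirac i)))
          + (1 - α) *
              (if j ∈ E t ∩ E (t + 1) then w t j * Real.exp (-η * ℓ t (dirac j)) else 0)
      else 0)
    (hpos : ∀ t, 0 < ∑ k ∈ E t, w t k)
    (p : ℕ → Fin N → ℝ)
    (hp : ∀ t i, p t i = (if i ∈ E t then w t i else 0) / ∑ k ∈ E t, w t k)
    -- a legal compound expert with at most `m` switches
    (σ : ℕ → Fin N)
    (hleg : ∀ t, t < T → σ t ∈ E t)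
    (hsw : ((Finset.Ico 1 T).filter fun t => σ (t - 1) ≠ σ t).card ≤ m) :
    ∑ t ∈ Finset.range T, (ℓ t (p t) - ℓ t (dirac (σ t)))
      ≤ ((m : ℝ) + 1) / η * Real.log N
        + (1 / η) * Real.log (1 / (α ^ m * (1 - α) ^ (T - m - 1)))
        + η / 8 * L ^ 2 * T :=
  fixed_share_regret_bound_general N T m hN hT hm η α L hη hα hα1 E hE ℓ hconv hbound w hw0 hupd
    hpos p hp σ hleg hsw
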